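/- arXiv:1907.09687 — 8 statements merged into one kernel-verified Lean document; each statement's English description precedes it below -/
import Mathlib

section
/- Let (X,B,b) be a coarse proximity space. Then the relation φ on subsets of X, defined by A φ B iff (every unbounded subset B' of B satisfies A b B', and every unbounded subset A' of A satisfies A' b B), is an equivalence relation on the power set of X. -/
open Set

universe u
variable {X : Type u}

/-- The axioms of a coarse proximity structure: a bornology `B` (contains singletons,
closed under subsets and finite unions) and a relation `b` satisfying symmetry,
unboundedness of related sets, relatedness of sets with unbounded intersection,
the union axiom, and the strong axiom. -/
structure IsCoarseProximity (B : Set (Set X)) (b : Set X → Set X → Prop) : Prop where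
  singleton_mem : ∀ x : X, {x} ∈ B
  subset_mem : ∀ A C : Set X, A ∈ B → C ⊆ A → C ∈ B
  union_mem : ∀ A C : Set X, A ∈ B → C ∈ B → A ∪ C ∈ B
  symm : ∀ A C : Set X, b A C → b C A
  unbounded_of_rel : ∀ A C : Set X, b A C → A ∉ B ∧ C ∉ B
  rel_of_inter : ∀ A C : Set X, A ∩ C ∉ B → b A C
  union_iff : ∀ A C D : Set X, b (A ∪ C) D ↔ b A D ∨ b C D
  strong : ∀ A C : Set X, ¬ b A C → ∃ E : Set X, ¬ b A E ∧ ¬ b (univ \ E) C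

/-- A coarse proximity space structure on `X`. -/
structure CoarseProximity (X : Type u) where
  B : Set (Set X)
  b : Set X → Set X → Prop
  isCP : IsCoarseProximity B b

/-- The weak asymptotic resemblance induced by a coarse proximity. -/
def phi (cp : CoarseProximity X) (A C : Set X) : Prop :=
  (∀ C' ⊆ C, C' ∉ cp.B → cp.b A C') ∧ (∀ A' ⊆ A, A' ∉ cp.B → cp.b A' C)

/-!
Reflexivity and symmetry of `φ` are immediate. Transitivity rests on one fact: if `A φ C` and
`C b D`, then `A b D`. Otherwise the strong axiom yields `E` with `A` far from `E` and `X \ E`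
far from `D`. Split `C = (C ∩ E) ∪ (C \ E)`; one piece is close to `D`. If it is `C ∩ E`, that
piece is unbounded, so `A φ C` makes it close to `A`, and then `A` is close to `E`; if it is
`C \ E ⊆ X \ E`, then `X \ E` is close to `D`. Either way the choice of `E` is contradicted.
-/

namespace CoarseProximity

variable (cp : CoarseProximity X) {A C D : Set X}

theorem rel_mono_left (h : cp.b A D) (hAC : A ⊆ C) : cp.b C D := by
  have : cp.b (A ∪ (C \ A)) D := (cp.isCP.union_iff A (C \ A) D).mpr (Or.inl h)
  rwa [union_sdiff_cancel hAC] at this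

theorem rel_mono_right (h : cp.b D A) (hAC : A ⊆ C) : cp.b D C :=
  cp.isCP.symm _ _ (cp.rel_mono_left (cp.isCP.symm _ _ h) hAC)

theorem rel_of_phi_of_rel (hAC : phi cp A C) (hCD : cp.b C D) : cp.b A D := by
  by_contra hAD
  obtain ⟨E, hAE, hED⟩ := cp.isCP.strong A D hAD
  rw [← inter_union_sdiff C E, cp.isCP.union_iff] at hCD
  rcases hCD with hin | hout
  · have hunb : C ∩ E ∉ cp.B := (cp.isCP.unbounded_of_rel _ _ hin).1
    exact hAE (cp.rel_mono_right (hAC.1 _ inter_subset_left hunb) inter_subset_right)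
  · exact hED (cp.rel_mono_left hout (sdiff_subset_sdiff_left (subset_univ C)))

theorem phi_refl (A : Set X) : phi cp A A :=
  ⟨fun A' hA' hunb => cp.isCP.rel_of_inter _ _ (by rwa [inter_eq_self_of_subset_right hA']),
   fun A' hA' hunb => cp.isCP.rel_of_inter _ _ (by rwa [inter_eq_self_of_subset_left hA'])⟩

theorem phi_symm (h : phi cp A C) : phi cp C A :=
  ⟨fun A' hA' hunb => cp.isCP.symm _ _ (h.2 A' hA' hunb),
   fun C' hC' hunb => cp.isCP.symm _ _ (h.1 C' hC' hunb)⟩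

theorem phi_trans (hAC : phi cp A C) (hCD : phi cp C D) : phi cp A D :=
  ⟨fun D' hD' hunb => cp.rel_of_phi_of_rel hAC (hCD.1 D' hD' hunb),
   fun A' hA' hunb => cp.isCP.symm _ _ <| cp.rel_of_phi_of_rel (cp.phi_symm hCD) <|
     cp.isCP.symm _ _ (hAC.2 A' hA' hunb)⟩

end CoarseProximity

/-- The weak asymptotic resemblance `φ` is an equivalence relation
on the power set of `X`. -/
theorem phi_equivalence (cp : CoarseProximity X) : Equivalence (phi cp) :=
  ⟨cp.phi_refl, cp.phi_symm, cp.phi_trans⟩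
end

section
/- Let (X,B,b) be a coarse proximity space and φ its weak asymptotic resemblance. If A φ B and C φ D, then (A ∪ C) φ (B ∪ D). -/
/-! An unbounded subset of `B ∪ D` meets `B` or `D` in an unbounded set, since the bornology
is closed under finite unions. That piece is related to `A` or to `C`, hence by the union
axiom the whole subset is related to `A ∪ C`; the other half of `φ` is symmetric. -/

open Set

universe u
variable {X : Type u}

namespace CoarseProximity

variable (cp : CoarseProximity X)

theorem b_of_subset_left {T S A : Set X} (hTS : T ⊆ S) (h : cp.b T A) : cp.b S A := by
  have : cp.b (T ∪ (S \ T)) A := (cp.isCP.union_iff T (S \ T) A).mpr (Or.inl h)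
  rwa [union_sdiff_cancel hTS] at this

theorem b_of_subset_right {T S A : Set X} (hTS : T ⊆ S) (h : cp.b A T) : cp.b A S :=
  cp.isCP.symm _ _ (cp.b_of_subset_left hTS (cp.isCP.symm _ _ h))

theorem inter_notMem_or_inter_notMem {S B D : Set X} (hS : S ⊆ B ∪ D) (hSB : S ∉ cp.B) :
    S ∩ B ∉ cp.B ∨ S ∩ D ∉ cp.B := by
  by_contra! h
  refine hSB (cp.isCP.subset_mem _ _ (cp.isCP.union_mem _ _ h.1 h.2) ?_)
  rw [← inter_union_distrib_left]
  exact subset_inter subset_rfl hS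

def RelUnboundedSubsets (A C : Set X) : Prop :=
  ∀ C' ⊆ C, C' ∉ cp.B → cp.b A C'

theorem phi_iff {A C : Set X} :
    phi cp A C ↔ cp.RelUnboundedSubsets A C ∧ cp.RelUnboundedSubsets C A := by
  refine and_congr Iff.rfl (forall₂_congr fun _ _ => imp_congr_right fun _ => ?_)
  exact ⟨cp.isCP.symm _ _, cp.isCP.symm _ _⟩

variable {cp} in
theorem RelUnboundedSubsets.union {A B C D : Set X} (hAB : cp.RelUnboundedSubsets A B)
    (hCD : cp.RelUnboundedSubsets C D) : cp.RelUnboundedSubsets (A ∪ C) (B ∪ D) := by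
  intro S hS hSB
  rw [cp.isCP.union_iff]
  rcases cp.inter_notMem_or_inter_notMem hS hSB with hB | hD
  · exact Or.inl (cp.b_of_subset_right inter_subset_left (hAB _ inter_subset_right hB))
  · exact Or.inr (cp.b_of_subset_right inter_subset_left (hCD _ inter_subset_right hD))

end CoarseProximity

/-- `A φ B` and `C φ D` imply `(A ∪ C) φ (B ∪ D)`. -/
theorem phi_union (cp : CoarseProximity X) (A B C D : Set X)
    (hAB : phi cp A B) (hCD : phi cp C D) : phi cp (A ∪ C) (B ∪ D) := by
  rw [CoarseProximity.phi_iff] at *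
  exact ⟨hAB.1.union hCD.1, hAB.2.union hCD.2⟩
end

section
/- Let (X,d) be a metric space, B the bornology of metrically bounded sets, and define A b B iff there exists ε > 0 such that for every bounded set D, d(A\D, B\D) < ε. Then (X,B,b) is a coarse proximity space. -/
/-!
For the strong axiom with `A`, `C` unbounded and not close, split `X` by which of the two sets
is nearer: `E = {x | infDist x C ≤ infDist x A}`. A point of `E` that is close to `A` far out
is also close to `C`, so `A` and `C` would be close (with a doubled constant), and symmetrically
for the complement of `E`.
-/

open Set

universe u
variable {X : Type u}

open Bornology

namespace Metric

section CoarselyClose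

variable [PseudoMetricSpace X] {A C S : Set X}

/-- `d(A \ D, C \ D) < ε`, with `d(∅, T) = ∞`, is encoded by a pair of points at
distance `< ε`. -/
def CoarselyClose (A C : Set X) : Prop :=
  ∃ ε > (0 : ℝ), ∀ D : Set X, IsBounded D → ∃ a ∈ A \ D, ∃ c ∈ C \ D, dist a c < ε

theorem not_coarselyClose_iff :
    ¬ CoarselyClose A C ↔
      ∀ ε > (0 : ℝ), ∃ D : Set X, IsBounded D ∧ ∀ a ∈ A \ D, ∀ c ∈ C \ D, ε ≤ dist a c := by
  simp only [CoarselyClose, not_exists, not_and, not_forall, not_lt, exists_prop]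

theorem CoarselyClose.symm (h : CoarselyClose A C) : CoarselyClose C A := by
  obtain ⟨ε, hε, h⟩ := h
  refine ⟨ε, hε, fun D hD => ?_⟩
  obtain ⟨a, ha, c, hc, hac⟩ := h D hD
  exact ⟨c, hc, a, ha, by rwa [dist_comm]⟩

theorem CoarselyClose.not_isBounded_left (h : CoarselyClose A C) : ¬ IsBounded A := by
  intro hA
  obtain ⟨ε, -, h⟩ := h
  obtain ⟨a, ha, -⟩ := h A hA
  exact ha.2 ha.1

theorem CoarselyClose.mono (h : CoarselyClose A C) {A' C' : Set X} (hA : A ⊆ A') (hC : C ⊆ C') :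
    CoarselyClose A' C' := by
  obtain ⟨ε, hε, h⟩ := h
  refine ⟨ε, hε, fun D hD => ?_⟩
  obtain ⟨a, ha, c, hc, hac⟩ := h D hD
  exact ⟨a, sdiff_subset_sdiff_left hA ha, c, sdiff_subset_sdiff_left hC hc, hac⟩

theorem coarselyClose_of_not_isBounded_inter (h : ¬ IsBounded (A ∩ C)) : CoarselyClose A C := by
  refine ⟨1, one_pos, fun D hD => ?_⟩
  obtain ⟨x, hx, hxD⟩ := not_subset.mp fun hsub => h (hD.subset hsub)
  exact ⟨x, ⟨hx.1, hxD⟩, x, ⟨hx.2, hxD⟩, by simp⟩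

theorem coarselyClose_union_left {B : Set X} :
    CoarselyClose (A ∪ B) C ↔ CoarselyClose A C ∨ CoarselyClose B C := by
  refine ⟨fun h => ?_, ?_⟩
  · by_contra! hAB
    obtain ⟨ε, hε, h⟩ := h
    obtain ⟨DA, hDA, hA⟩ := not_coarselyClose_iff.mp hAB.1 ε hε
    obtain ⟨DB, hDB, hB⟩ := not_coarselyClose_iff.mp hAB.2 ε hε
    obtain ⟨x, hx, c, hc, hxc⟩ := h (DA ∪ DB) (hDA.union hDB)
    simp only [mem_sdiff, mem_union, not_or] at hx hc
    refine hxc.not_ge ?_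
    rcases hx.1 with hxA | hxB
    · exact hA x ⟨hxA, hx.2.1⟩ c ⟨hc.1, hc.2.1⟩
    · exact hB x ⟨hxB, hx.2.2⟩ c ⟨hc.1, hc.2.2⟩
  · rintro (h | h)
    · exact h.mono subset_union_left subset_rfl
    · exact h.mono subset_union_right subset_rfl

theorem not_coarselyClose_of_infDist_le (hA : A.Nonempty) (hAC : ¬ CoarselyClose A C)
    (hS : ∀ x ∈ S, infDist x A ≤ infDist x C) : ¬ CoarselyClose S C := by
  rintro ⟨ε, hε, h⟩
  obtain ⟨D, hD, hsep⟩ := not_coarselyClose_iff.mp hAC (2 * ε) (by positivity)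
  obtain ⟨x, hx, c, hc, hxc⟩ := h (cthickening ε D) hD.cthickening
  have hxA : infDist x A < ε :=
    ((hS x hx.1).trans (infDist_le_dist_of_mem hc.1)).trans_lt hxc
  obtain ⟨a, ha, hxa⟩ := (infDist_lt_iff hA).mp hxA
  have haD : a ∉ D := fun haD =>
    hx.2 (mem_cthickening_of_dist_le x a ε D haD hxa.le)
  have hcD : c ∉ D := fun hcD => hc.2 (self_subset_cthickening D hcD)
  have hac : dist a c < 2 * ε := by
    calc dist a c ≤ dist a x + dist x c := dist_triangle a x c
      _ < ε + ε := by rw [dist_comm a x]; exact add_lt_add hxa hxc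
      _ = 2 * ε := by ring
  exact (hsep a ⟨ha, haD⟩ c ⟨hc.1, hcD⟩).not_gt hac

theorem exists_separating_of_not_coarselyClose (h : ¬ CoarselyClose A C) :
    ∃ E : Set X, ¬ CoarselyClose A E ∧ ¬ CoarselyClose (univ \ E) C := by
  by_cases hA : IsBounded A
  · refine ⟨univ, fun hAE => hAE.not_isBounded_left hA, fun hEC => ?_⟩
    exact hEC.not_isBounded_left (by simp)
  by_cases hC : IsBounded C
  · refine ⟨∅, fun hAE => hAE.symm.not_isBounded_left isBounded_empty, fun hEC => ?_⟩
    exact hEC.symm.not_isBounded_left hC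
  refine ⟨{x | infDist x C ≤ infDist x A}, fun hAE => ?_, ?_⟩
  · exact not_coarselyClose_of_infDist_le (nonempty_of_not_isBounded hC)
      (fun hCA => h hCA.symm) (fun x hx => hx) hAE.symm
  · exact not_coarselyClose_of_infDist_le (nonempty_of_not_isBounded hA) h
      (fun x hx => (not_le.mp hx.2).le)

theorem isCoarseProximity_coarselyClose :
    IsCoarseProximity {S : Set X | IsBounded S} CoarselyClose where
  singleton_mem _ := isBounded_singleton
  subset_mem _ _ hA hCA := hA.subset hCA
  union_mem _ _ hA hC := hA.union hC
  symm _ _ h := h.symm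
  unbounded_of_rel _ _ h := ⟨h.not_isBounded_left, h.symm.not_isBounded_left⟩
  rel_of_inter _ _ h := coarselyClose_of_not_isBounded_inter h
  union_iff _ _ _ := coarselyClose_union_left
  strong _ _ h := exists_separating_of_not_coarselyClose h

end CoarselyClose

end Metric

/-- for a metric space `X`, the metrically bounded sets together with
`A b C ↔ ∃ ε > 0, ∀ bounded D, d(A \ D, C \ D) < ε` form a coarse proximity space.
(Here `d(S,T) < ε` with the convention `d(∅,T) = ∞` is expressed by the existence of
points `s ∈ S`, `t ∈ T` with `dist s t < ε`.) -/
theorem metric_isCoarseProximity {X : Type u} [MetricSpace X] :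
    IsCoarseProximity {S : Set X | Bornology.IsBounded S}
      (fun A C => ∃ ε > (0 : ℝ), ∀ D : Set X, Bornology.IsBounded D →
        ∃ a ∈ A \ D, ∃ c ∈ C \ D, dist a c < ε) :=
  Metric.isCoarseProximity_coarselyClose
end

section
/- Let X be a locally compact Hausdorff space and X̄ a compactification of X. Let B be the collection of subsets of X with compact closure in X, and define A b B iff cl_{X̄}(A) ∩ cl_{X̄}(B) ∩ (X̄ \ X) ≠ ∅. Then (X,B,b) is a coarse proximity space. -/
open Set

universe u
variable {X : Type u}

/-!
Write `∂S := cl(S) ∩ (X̄ \ X)` for the trace of `S ⊆ X` on the remainder. Then `S` is bounded iff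
`∂S = ∅`, and `A b C` iff `∂A ∩ ∂C ≠ ∅`. Every axiom except the strong one only uses that `∂`
preserves finite unions and kills points. For the strong axiom, `∂A` and `∂C` are disjoint closed
subsets of the normal space `X̄`, so some open `V ⊇ ∂C` has closure missing `∂A`; then
`E := V ∩ X` works, since `X \ E` lies in the closed set `X̄ \ V`, which misses `∂C`.
-/

theorem IsCoarseProximity.of_trace {α : Type u} {β : Type*} (t : Set α → Set β)
    (union : ∀ A C, t (A ∪ C) = t A ∪ t C) (singleton : ∀ x, t {x} = ∅)
    (separation : ∀ A C, Disjoint (t A) (t C) →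
      ∃ E, Disjoint (t A) (t E) ∧ Disjoint (t (univ \ E)) (t C)) :
    IsCoarseProximity {S | t S = ∅} (fun A C => (t A ∩ t C).Nonempty) := by
  have mono : Monotone t := fun C A h => by
    rw [← union_eq_right.2 h, union]
    exact subset_union_left
  refine ⟨singleton, ?_, ?_, ?_, ?_, ?_, ?_, ?_⟩
  · intro A C hA hCA
    exact subset_eq_empty (mono hCA) hA
  · intro A C hA hC
    change t (A ∪ C) = ∅
    rw [union, hA.out, hC.out, union_empty]
  · intro A C h
    rwa [inter_comm]
  · intro A C h
    exact ⟨(h.mono inter_subset_left).ne_empty, (h.mono inter_subset_right).ne_empty⟩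
  · intro A C h
    exact (nonempty_iff_ne_empty.2 h).mono
      (subset_inter (mono inter_subset_left) (mono inter_subset_right))
  · intro A C D
    rw [union, union_inter_distrib_right, union_nonempty]
  · intro A C h
    simp only [not_nonempty_iff_eq_empty, ← disjoint_iff_inter_eq_empty] at h ⊢
    exact separation A C h

section RemainderTrace

variable {Y : Type*} [TopologicalSpace Y] {X : Set Y}

variable (X) in
def remainderTrace (S : Set X) : Set Y :=
  closure (Subtype.val '' S) ∩ Xᶜ

theorem remainderTrace_union (A C : Set X) :
    remainderTrace X (A ∪ C) = remainderTrace X A ∪ remainderTrace X C := by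
  rw [remainderTrace, image_union, closure_union, union_inter_distrib_right]; rfl

theorem remainderTrace_singleton [T1Space Y] (x : X) : remainderTrace X {x} = ∅ := by
  rw [remainderTrace, image_singleton, closure_singleton, singleton_inter_eq_empty]
  exact not_not_intro x.2

theorem isClosed_remainderTrace (hX : IsOpen X) (S : Set X) : IsClosed (remainderTrace X S) :=
  isClosed_closure.inter hX.isClosed_compl

theorem remainderTrace_eq_empty_iff [CompactSpace Y] [T2Space Y] (S : Set X) :
    remainderTrace X S = ∅ ↔ IsCompact (closure (Subtype.val '' S) ∩ X) := by
  rw [remainderTrace, ← disjoint_iff_inter_eq_empty, disjoint_compl_right_iff_subset]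
  constructor
  · intro h
    rw [inter_eq_left.2 h]
    exact isClosed_closure.isCompact
  · intro h
    exact (closure_minimal (subset_inter subset_closure (Subtype.coe_image_subset _ _))
      h.isClosed).trans inter_subset_right

theorem exists_disjoint_remainderTrace [NormalSpace Y] (hX : IsOpen X) {A C : Set X}
    (h : Disjoint (remainderTrace X A) (remainderTrace X C)) :
    ∃ E, Disjoint (remainderTrace X A) (remainderTrace X E) ∧
      Disjoint (remainderTrace X (univ \ E)) (remainderTrace X C) := by
  obtain ⟨V, hV, hCV, hVA⟩ := normal_exists_closure_subset (isClosed_remainderTrace hX C)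
    (isClosed_remainderTrace hX A).isOpen_compl h.subset_compl_left
  refine ⟨Subtype.val ⁻¹' V, ?_, ?_⟩
  · have : remainderTrace X (Subtype.val ⁻¹' V) ⊆ closure V :=
      inter_subset_left.trans (closure_mono (image_preimage_subset _ _))
    exact (subset_compl_iff_disjoint_right.1 hVA).symm.mono_right this
  · have : remainderTrace X (univ \ Subtype.val ⁻¹' V) ⊆ Vᶜ := by
      refine inter_subset_left.trans (closure_minimal ?_ hV.isClosed_compl)
      rintro _ ⟨y, hy, rfl⟩
      exact hy.2
    exact (disjoint_compl_left_iff_subset.2 hCV).mono_left this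

end RemainderTrace

theorem compactification_isCoarseProximity_general {Xbar : Type u} [TopologicalSpace Xbar]
    [CompactSpace Xbar] [T2Space Xbar] (X : Set Xbar) (hX : IsOpen X) :
    IsCoarseProximity (X := ↥X)
      {S : Set ↥X | IsCompact (closure (Subtype.val '' S : Set Xbar) ∩ X)}
      (fun A C => (closure (Subtype.val '' A : Set Xbar) ∩
        closure (Subtype.val '' C : Set Xbar) ∩ Xᶜ).Nonempty) := by
  have bounded_iff : {S : Set X | IsCompact (closure (Subtype.val '' S) ∩ X)} =
      {S | remainderTrace X S = ∅} :=
    ext fun S => (remainderTrace_eq_empty_iff S).symm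
  have rel_iff : (fun A C : Set X => (closure (Subtype.val '' A) ∩
      closure (Subtype.val '' C) ∩ Xᶜ).Nonempty) =
      fun A C => (remainderTrace X A ∩ remainderTrace X C).Nonempty := by
    funext A C
    rw [remainderTrace, remainderTrace, inter_inter_distrib_right]
  rw [bounded_iff, rel_iff]
  exact .of_trace _ remainderTrace_union remainderTrace_singleton
    fun _ _ => exists_disjoint_remainderTrace hX

/-- for a dense open subset `X` of a compact Hausdorff space `X̄`
(so `X` is locally compact Hausdorff and `X̄` is a compactification of `X`),
the sets with compact closure in `X` together with
`A b C ↔ cl_X̄(A) ∩ cl_X̄(C) ∩ (X̄ \ X) ≠ ∅` form a coarse proximity space. -/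
theorem compactification_isCoarseProximity {Xbar : Type u} [TopologicalSpace Xbar]
    [CompactSpace Xbar] [T2Space Xbar] (X : Set Xbar) (hX : IsOpen X) (hd : Dense X) :
    IsCoarseProximity (X := ↥X)
      {S : Set ↥X | IsCompact (closure (Subtype.val '' S : Set Xbar) ∩ X)}
      (fun A C => (closure (Subtype.val '' A : Set Xbar) ∩
        closure (Subtype.val '' C : Set Xbar) ∩ Xᶜ).Nonempty) :=
  compactification_isCoarseProximity_general X hX
end

section
/- Let f: (X,B₁,b₁) → (Y,B₂,b₂) be a coarse proximity isomorphism with coarse inverse g. Then for all A, B ⊆ X: A b₁ B if and only if f(A) b₂ f(B). -/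
open Set

universe u
variable {X : Type u}

variable {Y : Type u}

/-- A coarse proximity map: sends bounded sets to bounded sets and preserves `b`. -/
def IsCPMap (cp1 : CoarseProximity X) (cp2 : CoarseProximity Y) (f : X → Y) : Prop :=
  (∀ A ∈ cp1.B, f '' A ∈ cp2.B) ∧ ∀ A C : Set X, cp1.b A C → cp2.b (f '' A) (f '' C)

/-- Two maps into a coarse proximity space are close if images of every subset
are `φ`-related. -/
def CloseMaps {Z : Type u} (cp : CoarseProximity Y) (f g : Z → Y) : Prop :=
  ∀ A : Set Z, phi cp (f '' A) (g '' A)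

namespace CoarseProximity

variable {cp : CoarseProximity X} {A C D : Set X}

lemma b_mono_left (h : cp.b A C) (hAD : A ⊆ D) : cp.b D C := by
  rw [← union_sdiff_cancel hAD]
  exact (cp.isCP.union_iff _ _ _).2 (Or.inl h)

lemma b_mono_right (h : cp.b A C) (hCD : C ⊆ D) : cp.b A D :=
  cp.isCP.symm _ _ (b_mono_left (cp.isCP.symm _ _ h) hCD)

/-- Split `A` along a set `E` that the strong axiom puts between `C` and `D`: the part of `A`
inside `E` is far from `C`, and the part outside `E`, if unbounded, is close to `D`. -/
lemma b_of_phi (hAD : phi cp A D) (hCA : cp.b C A) : cp.b C D := by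
  by_contra hCD
  obtain ⟨E, hCE, hED⟩ := cp.isCP.strong C D hCD
  have hsplit : cp.b (A ∩ E) C ∨ cp.b (A \ E) C := by
    rw [← cp.isCP.union_iff, inter_union_sdiff]
    exact cp.isCP.symm _ _ hCA
  rcases hsplit with hin | hout
  · exact hCE (b_mono_right (cp.isCP.symm _ _ hin) inter_subset_right)
  · have hunb : A \ E ∉ cp.B := (cp.isCP.unbounded_of_rel _ _ hout).1
    exact hED (b_mono_left (hAD.2 _ sdiff_subset hunb) fun x hx => ⟨mem_univ x, hx.2⟩)

end CoarseProximity

open CoarseProximity in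
lemma CloseMaps.b_of_b_image {cp : CoarseProximity X} {h : X → X} (hh : CloseMaps cp h id)
    {A C : Set X} (hAC : cp.b (h '' A) (h '' C)) : cp.b A C := by
  have hA : phi cp (h '' A) A := by simpa only [image_id] using hh A
  have hC : phi cp (h '' C) C := by simpa only [image_id] using hh C
  have hCA : cp.b (h '' C) A := b_of_phi hA (cp.isCP.symm _ _ hAC)
  exact b_of_phi hC (cp.isCP.symm _ _ hCA)

theorem iso_preserves_b_general {Y : Type u} (cp1 : CoarseProximity X) (cp2 : CoarseProximity Y)
    (f : X → Y) (g : Y → X) (hf : IsCPMap cp1 cp2 f) (hg : IsCPMap cp2 cp1 g)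
    (hgf : CloseMaps cp1 (g ∘ f) id)
    (A C : Set X) : cp1.b A C ↔ cp2.b (f '' A) (f '' C) := by
  refine ⟨hf.2 A C, fun h => hgf.b_of_b_image ?_⟩
  simpa only [image_comp] using hg.2 _ _ h

/-- a coarse proximity isomorphism `f` (with coarse inverse `g`)
satisfies `A b₁ B ↔ f(A) b₂ f(B)`. -/
theorem iso_preserves_b {Y : Type u} (cp1 : CoarseProximity X) (cp2 : CoarseProximity Y)
    (f : X → Y) (g : Y → X) (hf : IsCPMap cp1 cp2 f) (hg : IsCPMap cp2 cp1 g)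
    (hgf : CloseMaps cp1 (g ∘ f) id) (hfg : CloseMaps cp2 (f ∘ g) id)
    (A C : Set X) : cp1.b A C ↔ cp2.b (f '' A) (f '' C) :=
  iso_preserves_b_general cp1 cp2 f g hf hg hgf A C
end

section
/- Let f: (X,B₁,b₁) → (Y,B₂,b₂) be a coarse proximity isomorphism with coarse inverse g, and let φ₁, φ₂ be the induced weak asymptotic resemblances. Then for all A, B ⊆ X: A φ₁ B if and only if f(A) φ₂ f(B). -/
/-!
The weak asymptotic resemblance `φ` is symmetric and transitive (transitivity is where the
strong axiom enters), and coarse proximity maps preserve it. So if `f A φ₂ f C`, applying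
`g` gives `g f A φ₁ g f C`, and closeness of `g ∘ f` to the identity links both sides to `A`
and `C`.
-/

open Set

universe u
variable {X : Type u}

variable {Y : Type u}

namespace CoarseProximity

theorem b_mono_left_s7 (cp : CoarseProximity X) {A A' C : Set X} (h : cp.b A C) (hAA' : A ⊆ A') :
    cp.b A' C := by
  rw [← union_sdiff_cancel hAA', cp.isCP.union_iff]
  exact Or.inl h

theorem b_mono_right_s7 (cp : CoarseProximity X) {A C C' : Set X} (h : cp.b A C) (hCC' : C ⊆ C') :
    cp.b A C' :=
  cp.isCP.symm _ _ (cp.b_mono_left_s7 (cp.isCP.symm _ _ h) hCC')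

end CoarseProximity

namespace phi

variable {cp : CoarseProximity X}

theorem symm {A C : Set X} (h : phi cp A C) : phi cp C A :=
  ⟨fun A' hA' hub => cp.isCP.symm _ _ (h.2 A' hA' hub),
   fun C' hC' hub => cp.isCP.symm _ _ (h.1 C' hC' hub)⟩

/-- Split `B` along the set `E` that the strong axiom provides for `¬ b A D`. -/
theorem b_of_b {A B D : Set X} (hAB : phi cp A B) (hBD : cp.b B D) : cp.b A D := by
  by_contra hAD
  obtain ⟨E, hAE, hED⟩ := cp.isCP.strong A D hAD
  rw [← inter_union_sdiff B E, cp.isCP.union_iff] at hBD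
  rcases hBD with hin | hout
  · have hA_BE : cp.b A (B ∩ E) :=
      hAB.1 _ inter_subset_left (cp.isCP.unbounded_of_rel _ _ hin).1
    exact hAE (cp.b_mono_right_s7 hA_BE inter_subset_right)
  · exact hED (cp.b_mono_left_s7 hout fun x hx => ⟨trivial, hx.2⟩)

theorem trans {A B C : Set X} (hAB : phi cp A B) (hBC : phi cp B C) : phi cp A C :=
  ⟨fun C' hC' hub => hAB.b_of_b (hBC.1 C' hC' hub),
   fun A' hA' hub => cp.isCP.symm _ _ (hBC.symm.b_of_b (cp.isCP.symm _ _ (hAB.2 A' hA' hub)))⟩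

end phi

namespace IsCPMap

variable {cp1 : CoarseProximity X} {cp2 : CoarseProximity Y} {f : X → Y}

theorem b_image_of_phi (hf : IsCPMap cp1 cp2 f) {A C : Set X} (h : phi cp1 A C)
    {C' : Set Y} (hC' : C' ⊆ f '' C) (hub : C' ∉ cp2.B) : cp2.b (f '' A) C' := by
  have hD : f '' (C ∩ f ⁻¹' C') = C' := by
    rw [image_inter_preimage, inter_eq_right.2 hC']
  have hDub : C ∩ f ⁻¹' C' ∉ cp1.B := fun hb => hub (hD ▸ hf.1 _ hb)
  simpa only [hD] using hf.2 A _ (h.1 _ inter_subset_left hDub)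

theorem phi_image (hf : IsCPMap cp1 cp2 f) {A C : Set X} (h : phi cp1 A C) :
    phi cp2 (f '' A) (f '' C) :=
  ⟨fun _ hC' hub => hf.b_image_of_phi h hC' hub,
   fun _ hA' hub => cp2.isCP.symm _ _ (hf.b_image_of_phi h.symm hA' hub)⟩

end IsCPMap

theorem iso_preserves_phi_general {Y : Type u} (cp1 : CoarseProximity X) (cp2 : CoarseProximity Y)
    (f : X → Y) (g : Y → X) (hf : IsCPMap cp1 cp2 f) (hg : IsCPMap cp2 cp1 g)
    (hgf : CloseMaps cp1 (g ∘ f) id)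
    (A C : Set X) : phi cp1 A C ↔ phi cp2 (f '' A) (f '' C) := by
  refine ⟨hf.phi_image, fun h => ?_⟩
  have hgfA : phi cp1 ((g ∘ f) '' A) A := by simpa only [image_id] using hgf A
  have hgfC : phi cp1 ((g ∘ f) '' C) C := by simpa only [image_id] using hgf C
  have hback : phi cp1 ((g ∘ f) '' A) ((g ∘ f) '' C) := by
    simpa only [image_comp] using hg.phi_image h
  exact (hgfA.symm.trans hback).trans hgfC

/-- a coarse proximity isomorphism `f` (with coarse inverse `g`)
satisfies `A φ₁ B ↔ f(A) φ₂ f(B)`. -/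
theorem iso_preserves_phi {Y : Type u} (cp1 : CoarseProximity X) (cp2 : CoarseProximity Y)
    (f : X → Y) (g : Y → X) (hf : IsCPMap cp1 cp2 f) (hg : IsCPMap cp2 cp1 g)
    (hgf : CloseMaps cp1 (g ∘ f) id) (hfg : CloseMaps cp2 (f ∘ g) id)
    (A C : Set X) : phi cp1 A C ↔ phi cp2 (f '' A) (f '' C) :=
  iso_preserves_phi_general cp1 cp2 f g hf hg hgf A C
end

section
/- Let (X,B,b) be a coarse proximity space with boundary UX (the set of clusters in the Smirnov compactification of the discrete extension δ containing no bounded set). If σ ∈ UX and A, B ∈ σ, then A b B. -/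
/-! If `A b B` failed, `A ∩ B` would be bounded, so `A \ B` would still lie in `σ`.
Being disjoint from `B` and δ-close to it, `A \ B` is `b`-close to `B`, hence so is `A ⊇ A \ B`. -/

open Set

universe u
variable {X : Type u}

/-- The discrete extension of the coarse proximity `b`. -/
def deltaExt (cp : CoarseProximity X) (A C : Set X) : Prop :=
  (A ∩ C).Nonempty ∨ cp.b A C

/-- A cluster in the proximity space given by the discrete extension of `b`:
any two members are close, any set close to all members is a member, and a union
belongs only if one of the pieces does. -/
structure IsCluster (cp : CoarseProximity X) (σ : Set (Set X)) : Prop where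
  close : ∀ A ∈ σ, ∀ C ∈ σ, deltaExt cp A C
  mem_of_close : ∀ C : Set X, (∀ A ∈ σ, deltaExt cp C A) → C ∈ σ
  union_cases : ∀ A C : Set X, A ∪ C ∈ σ → A ∈ σ ∨ C ∈ σ

/-- The boundary `𝒰X` of the coarse proximity space: clusters (in the Smirnov
compactification of the discrete extension) containing no bounded set. -/
def UX (cp : CoarseProximity X) : Set (Set (Set X)) :=
  {σ | IsCluster cp σ ∧ ∀ A ∈ σ, A ∉ cp.B}

/-- The trace `A' = cl_𝔛(A) ∩ 𝒰X` of `A ⊆ X` in the boundary; a cluster of the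
boundary lies in the closure of `A` in the Smirnov compactification iff `A` is a
member of the cluster. -/
def trace (cp : CoarseProximity X) (A : Set X) : Set (Set (Set X)) :=
  {σ ∈ UX cp | A ∈ σ}

/-- Relative closure in a subspace `Y` of the Smirnov compactification: a cluster
`σ ∈ Y` lies in the closure of `S ⊆ Y` iff every subset of `X` absorbing `S`
(i.e. belonging to every cluster of `S`) belongs to `σ`. -/
def clRel (Y S : Set (Set (Set X))) : Set (Set (Set X)) :=
  {σ ∈ Y | ∀ C : Set X, (∀ τ ∈ S, C ∈ τ) → C ∈ σ}

/-- A subset of `Y` is relatively closed iff it contains its relative closure. -/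
def relClosed (Y K : Set (Set (Set X))) : Prop :=
  K ⊆ Y ∧ clRel Y K ⊆ K

/-- Interior in the boundary `𝒰X`. -/
def intU (cp : CoarseProximity X) (S : Set (Set (Set X))) : Set (Set (Set X)) :=
  UX cp \ clRel (UX cp) (UX cp \ S)

/-- Closed subsets of the boundary `𝒰X`. -/
def IsClosedU (cp : CoarseProximity X) (K : Set (Set (Set X))) : Prop :=
  relClosed (UX cp) K

/-- Open subsets of the boundary `𝒰X`. -/
def IsOpenU (cp : CoarseProximity X) (U : Set (Set (Set X))) : Prop :=
  U ⊆ UX cp ∧ IsClosedU cp (UX cp \ U)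

theorem IsCoarseProximity.rel_of_subset_left {B : Set (Set X)} {b : Set X → Set X → Prop}
    (h : IsCoarseProximity B b) {A A' D : Set X} (hA'D : b A' D) (hA' : A' ⊆ A) : b A D := by
  simpa only [union_eq_self_of_subset_left hA'] using (h.union_iff A' A D).mpr (Or.inl hA'D)

theorem deltaExt.rel_of_disjoint {cp : CoarseProximity X} {A C : Set X}
    (h : deltaExt cp A C) (hAC : Disjoint A C) : cp.b A C :=
  h.resolve_left (by simp [hAC.inter_eq])

theorem IsCluster.diff_mem {cp : CoarseProximity X} {σ : Set (Set X)} (hσ : IsCluster cp σ)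
    {A C : Set X} (hA : A ∈ σ) (hAC : A ∩ C ∉ σ) : A \ C ∈ σ :=
  (hσ.union_cases _ _ (by rwa [sdiff_union_inter])).resolve_right hAC

/-- if `σ` belongs to the boundary `𝒰X` and `A, B ∈ σ`, then `A b B`. -/
theorem b_of_mem_boundary_cluster (cp : CoarseProximity X) (σ : Set (Set X))
    (hσ : σ ∈ UX cp) (A B : Set X) (hA : A ∈ σ) (hB : B ∈ σ) : cp.b A B := by
  obtain ⟨hcluster, hunbdd⟩ := hσ
  by_contra hAB
  have hbdd : A ∩ B ∈ cp.B := not_not.mp (mt (cp.isCP.rel_of_inter A B) hAB)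
  have hdiff : A \ B ∈ σ := hcluster.diff_mem hA fun h ↦ hunbdd _ h hbdd
  have hdiffB : cp.b (A \ B) B :=
    (hcluster.close _ hdiff _ hB).rel_of_disjoint disjoint_sdiff_left
  exact hAB (cp.isCP.rel_of_subset_left hdiffB sdiff_subset)
end

section
/- Let (X,B,b) be a coarse proximity space with Smirnov compactification 𝔛 of its discrete extension, and boundary UX. For unbounded A, B ⊆ X with traces A' = cl_𝔛(A) ∩ UX and B' = cl_𝔛(B) ∩ UX: A b B if and only if A' ∩ B' ≠ ∅. -/
open Set

universe u
variable {X : Type u}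

section MyAux

variable (cp : CoarseProximity X)

lemma my_b_mono_right {A C C' : Set X} (h : cp.b A C) (hC : C ⊆ C') : cp.b A C' := by
  have := (cp.isCP.union_iff C (C' \ C) A).2 (Or.inl (cp.isCP.symm _ _ h))
  rw [union_diff_cancel hC] at this
  exact cp.isCP.symm _ _ this

lemma my_b_mono {A A' C C' : Set X} (h : cp.b A C) (hA : A ⊆ A') (hC : C ⊆ C') :
    cp.b A' C' :=
  my_b_mono_right cp (cp.isCP.symm _ _ (my_b_mono_right cp (cp.isCP.symm _ _ h) hA)) hC

lemma my_delta_symm {A C : Set X} (h : deltaExt cp A C) : deltaExt cp C A := by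
  rcases h with h | h
  · exact Or.inl (by rwa [inter_comm])
  · exact Or.inr (cp.isCP.symm _ _ h)

lemma my_delta_mono {A A' C C' : Set X} (h : deltaExt cp A C) (hA : A ⊆ A') (hC : C ⊆ C') :
    deltaExt cp A' C' := by
  rcases h with h | h
  · exact Or.inl (h.mono (inter_subset_inter hA hC))
  · exact Or.inr (my_b_mono cp h hA hC)

lemma my_delta_union {A C D : Set X} :
    deltaExt cp (A ∪ C) D ↔ deltaExt cp A D ∨ deltaExt cp C D := by
  unfold deltaExt
  rw [union_inter_distrib_right, union_nonempty, cp.isCP.union_iff]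
  tauto

lemma my_delta_strong {C D : Set X} (h : ¬ deltaExt cp C D) :
    ∃ F : Set X, ¬ deltaExt cp C F ∧ ¬ deltaExt cp (univ \ F) D := by
  have hCD : ¬ (C ∩ D).Nonempty := fun hx => h (Or.inl hx)
  have hbCD : ¬ cp.b C D := fun hx => h (Or.inr hx)
  obtain ⟨E, hE1, hE2⟩ := cp.isCP.strong C D hbCD
  refine ⟨(E ∪ D) \ C, ?_, ?_⟩
  · rintro (hx | hx)
    · obtain ⟨x, hxC, hxF⟩ := hx
      exact hxF.2 hxC
    · have : cp.b C (E ∪ D) := my_b_mono_right cp hx diff_subset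
      rcases (cp.isCP.union_iff E D C).1 (cp.isCP.symm _ _ this) with h1 | h1
      · exact hE1 (cp.isCP.symm _ _ h1)
      · exact hbCD (cp.isCP.symm _ _ h1)
  · have heq : univ \ ((E ∪ D) \ C) = (univ \ (E ∪ D)) ∪ C := by
      ext x
      simp only [mem_diff, mem_union, mem_univ, true_and]
      tauto
    rw [heq, my_delta_union]
    rintro ((hx | hx) | hx)
    · obtain ⟨x, hx1, hx2⟩ := hx
      exact hx1.2 (Or.inr hx2)
    · exact hE2 (my_b_mono cp hx (diff_subset_diff_right subset_union_left) (subset_refl _))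
    · exact h hx

end MyAux

/-- for unbounded `A, B ⊆ X`, `A b B` iff the traces `A'` and `B'`
in the boundary `𝒰X` intersect. -/
theorem b_iff_traces_intersect (cp : CoarseProximity X) (A B : Set X)
    (hA : A ∉ cp.B) (hB : B ∉ cp.B) :
    cp.b A B ↔ (trace cp A ∩ trace cp B).Nonempty := by
  constructor
  · intro hb
    by_cases h0 : (∅ : Set X) ∈ cp.B
    · -- main case: build an ultrafilter and take the induced cluster
      have hb0 : ¬ cp.b (∅ : Set X) B := fun h => (cp.isCP.unbounded_of_rel _ _ h).1 h0
      let F : Filter X :=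
        { sets := {U | ¬ cp.b (A \ U) B}
          univ_sets := by simpa [diff_univ] using hb0
          sets_of_superset := fun {U V} hU hUV hbV =>
            hU (my_b_mono cp hbV (diff_subset_diff_right hUV) (subset_refl _))
          inter_sets := fun {U V} hU hV hbUV => by
            rw [diff_inter] at hbUV
            rcases (cp.isCP.union_iff _ _ _).1 hbUV with h | h
            exacts [hU h, hV h] }
      have hmemF : ∀ U : Set X, U ∈ F ↔ ¬ cp.b (A \ U) B := fun U => Iff.rfl
      have hne : F.NeBot := by
        refine Filter.neBot_iff.mpr fun hbot => ?_
        have h1 : (∅ : Set X) ∈ F := by rw [hbot]; exact Filter.mem_bot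
        rw [hmemF, diff_empty] at h1
        exact h1 hb
      haveI := hne
      let 𝒰 : Ultrafilter X := Ultrafilter.of F
      have hle : (𝒰 : Filter X) ≤ F := Ultrafilter.of_le F
      have hAU : A ∈ 𝒰 := hle (by rw [hmemF, diff_self]; exact hb0)
      have hUB : ∀ U ∈ 𝒰, cp.b U B := by
        intro U hU
        by_contra hn
        have hc : Uᶜ ∈ F := by
          rw [hmemF, diff_compl]
          exact fun h => hn (my_b_mono cp h inter_subset_right (subset_refl _))
        exact (Ultrafilter.compl_mem_iff_notMem.mp (hle hc)) hU
      have hbdd : ∀ C : Set X, C ∈ cp.B → Cᶜ ∈ 𝒰 := by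
        intro C hC
        refine hle ?_
        rw [hmemF, diff_compl]
        exact fun h =>
          (cp.isCP.unbounded_of_rel _ _ h).1 (cp.isCP.subset_mem C _ hC inter_subset_right)
      set σ : Set (Set X) := {C | ∀ U ∈ 𝒰, deltaExt cp C U} with hσdef
      have hUσ : ∀ U ∈ 𝒰, U ∈ σ := by
        intro U hU V hV
        exact Or.inl (Filter.nonempty_of_mem (Filter.inter_mem hU hV))
      have hAσ : A ∈ σ := hUσ A hAU
      have hBσ : B ∈ σ := fun U hU => my_delta_symm cp (Or.inr (hUB U hU))
      have hclose : ∀ C ∈ σ, ∀ D ∈ σ, deltaExt cp C D := by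
        intro C hC D hD
        by_contra hn
        obtain ⟨G, hG1, hG2⟩ := my_delta_strong cp hn
        rcases Ultrafilter.mem_or_compl_mem 𝒰 G with hG | hG
        · exact hG1 (hC G hG)
        · have : deltaExt cp D Gᶜ := hD Gᶜ hG
          rw [compl_eq_univ_diff] at this
          exact hG2 (my_delta_symm cp this)
      have hmemcl : ∀ C : Set X, (∀ D ∈ σ, deltaExt cp C D) → C ∈ σ := by
        intro C h U hU
        exact h U (hUσ U hU)
      have huc : ∀ C D : Set X, C ∪ D ∈ σ → C ∈ σ ∨ D ∈ σ := by
        intro C D h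
        by_contra hn
        push_neg at hn
        obtain ⟨hC, hD⟩ := hn
        simp only [hσdef, mem_setOf_eq, not_forall, exists_prop] at hC hD
        obtain ⟨U, hU, hCU⟩ := hC
        obtain ⟨V, hV, hDV⟩ := hD
        have hUV : U ∩ V ∈ 𝒰 := Filter.inter_mem hU hV
        rcases (my_delta_union cp).1 (h (U ∩ V) hUV) with h1 | h1
        · exact hCU (my_delta_mono cp h1 (subset_refl _) inter_subset_left)
        · exact hDV (my_delta_mono cp h1 (subset_refl _) inter_subset_right)
      have hnob : ∀ C ∈ σ, C ∉ cp.B := by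
        intro C hC hCB
        rcases hC Cᶜ (hbdd C hCB) with h | h
        · simp at h
        · exact (cp.isCP.unbounded_of_rel _ _ h).1 hCB
      exact ⟨σ, ⟨⟨⟨hclose, hmemcl, huc⟩, hnob⟩, hAσ⟩, ⟨⟨⟨hclose, hmemcl, huc⟩, hnob⟩, hBσ⟩⟩
    · -- degenerate case: the bornology is empty
      have hBempty : ∀ S : Set X, S ∉ cp.B := fun S hS =>
        h0 (cp.isCP.subset_mem S ∅ hS (empty_subset S))
      refine ⟨(univ : Set (Set X)), ?_, ?_⟩
      · refine ⟨⟨⟨?_, fun _ _ => mem_univ _, fun _ _ _ => Or.inl (mem_univ _)⟩,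
          fun S _ => hBempty S⟩, mem_univ _⟩
        intro C _ D _
        exact Or.inr (cp.isCP.rel_of_inter C D (hBempty _))
      · refine ⟨⟨⟨?_, fun _ _ => mem_univ _, fun _ _ _ => Or.inl (mem_univ _)⟩,
          fun S _ => hBempty S⟩, mem_univ _⟩
        intro C _ D _
        exact Or.inr (cp.isCP.rel_of_inter C D (hBempty _))
  · rintro ⟨σ, ⟨⟨hcl, hunb⟩, hAσ⟩, ⟨_, hBσ⟩⟩
    by_cases hAB : A ∩ B ∈ cp.B
    · set D := A ∩ B with hD
      have hDA : D ⊆ A := inter_subset_left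
      have hDB : D ⊆ B := inter_subset_right
      have hDnσ : D ∉ σ := fun h => hunb D h hAB
      have hAσ' : A \ D ∈ σ := by
        have := hcl.union_cases (A \ D) D (by rw [diff_union_of_subset hDA]; exact hAσ)
        tauto
      have hBσ' : B \ D ∈ σ := by
        have := hcl.union_cases (B \ D) D (by rw [diff_union_of_subset hDB]; exact hBσ)
        tauto
      have hδ := hcl.close _ hAσ' _ hBσ'
      rcases hδ with h | h
      · exfalso
        obtain ⟨x, ⟨hxA, hxD⟩, hxB, _⟩ := h
        exact hxD ⟨hxA, hxB⟩
      · exact my_b_mono cp h diff_subset diff_subset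
    · exact cp.isCP.rel_of_inter A B hAB
end
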